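/- arXiv:1908.09978 — 8 statements merged into one kernel-verified Lean document; each statement's English description precedes it below -/
import Mathlib

section
/- Let K be an algebraically closed field of characteristic zero, let n ≥ 4 and 2 ≤ r ≤ n−2, and let a_1, …, a_r and b_1, …, b_{n−r} be nonnegative integers. Then for every r × (n−r) matrix P over K[x,y] whose (i,j) entry is homogeneous of degree a_i + b_j, there exist an r × n matrix A over K[x,y] whose (i,j) entry is homogeneous of degree a_i and an n × (n−r) matrix B over K[x,y] whose (i,j) entry is homogeneous of degree b_j, such that P = A · B. (Surjectivity of the multiplication map Φ : Hom(K, O^{⊕n}) × Hom(O^{⊕n}, E) → Hom(K, E), where E = ⊕_i O_{P^1}(a_i) and K = ⊕_j O_{P^1}(−b_j), expressed in matrix form.) -/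
/-!
Every monomial of degree `a + b` in `x, y` is divisible by `x ^ a` or by `y ^ b`, so each entry
splits as `P i j = x ^ a i * C i j + D i j * y ^ b j` with homogeneous `C i j` of degree `b j` and
`D i j` of degree `a i`. Then `P = [diag (x ^ a) | D] * [C ; diag (y ^ b)]`, a factorization
through `r + (n - r) = n` columns.
-/

open MvPolynomial Matrix

namespace MvPolynomial

variable {σ R : Type*} [CommSemiring R] {p : MvPolynomial σ R} {n : ℕ}

theorem IsHomogeneous.divMonomial (hp : p.IsHomogeneous n) (s : σ →₀ ℕ) :
    (p.divMonomial s).IsHomogeneous (n - s.degree) := by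
  intro m hm
  rw [coeff_divMonomial] at hm
  have hsm : (s + m).degree = n := by
    by_contra h; exact hm (hp.coeff_eq_zero h)
  rw [Pi.one_def, ← Finsupp.degree_eq_weight_one, ← hsm, map_add, Nat.add_sub_cancel_left]

theorem IsHomogeneous.modMonomial (hp : p.IsHomogeneous n) (s : σ →₀ ℕ) :
    (p.modMonomial s).IsHomogeneous n := by
  intro m hm
  by_cases hs : s ≤ m
  · exact absurd (coeff_modMonomial_of_le p hs) hm
  · exact hp (by rwa [coeff_modMonomial_of_not_le p hs] at hm)

theorem IsHomogeneous.exists_eq_X_pow_mul_add_mul_X_pow {p : MvPolynomial (Fin 2) R}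
    {a b : ℕ} (hp : p.IsHomogeneous (a + b)) :
    ∃ c d : MvPolynomial (Fin 2) R, c.IsHomogeneous b ∧ d.IsHomogeneous a ∧
      p = X 0 ^ a * c + d * X 1 ^ b := by
  set q := p.modMonomial (Finsupp.single 0 a)
  have hq : q.IsHomogeneous (a + b) := hp.modMonomial _
  -- a monomial of degree `a + b` not divisible by `x ^ a` is divisible by `y ^ b`
  have hq_mod : q.modMonomial (Finsupp.single 1 b) = 0 := by
    ext m
    by_cases hb : Finsupp.single 1 b ≤ m
    · rw [coeff_modMonomial_of_le q hb, coeff_zero]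
    rw [coeff_modMonomial_of_not_le q hb, coeff_zero]
    by_contra hm
    have ha : ¬ Finsupp.single 0 a ≤ m := fun ha => hm (coeff_modMonomial_of_le p ha)
    have hdeg : m 0 + m 1 = a + b := by
      rw [← Fin.sum_univ_two (f := fun i => m i), ← Finsupp.degree_eq_sum]
      by_contra h; exact hm (hq.coeff_eq_zero h)
    rw [Finsupp.single_le_iff] at ha hb
    omega
  refine ⟨p.divMonomial (Finsupp.single 0 a), q.divMonomial (Finsupp.single 1 b), ?_, ?_, ?_⟩
  · simpa using hp.divMonomial (Finsupp.single 0 a)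
  · simpa using hq.divMonomial (Finsupp.single 1 b)
  · have hq_eq := divMonomial_add_modMonomial q (Finsupp.single 1 b)
    rw [hq_mod, add_zero] at hq_eq
    rw [X_pow_eq_monomial, X_pow_eq_monomial, mul_comm _ (monomial _ 1), hq_eq,
      divMonomial_add_modMonomial]

theorem isHomogeneous_diagonal_apply {ι : Type*} [DecidableEq ι] {w : ι → ℕ}
    {f : ι → MvPolynomial σ R} (hf : ∀ i, (f i).IsHomogeneous (w i)) (i j : ι) :
    (diagonal f i j).IsHomogeneous (w i) ∧ (diagonal f i j).IsHomogeneous (w j) := by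
  rw [diagonal_apply]
  split_ifs with h
  · subst h; exact ⟨hf i, hf i⟩
  · exact ⟨isHomogeneous_zero _ _ _, isHomogeneous_zero _ _ _⟩

end MvPolynomial

theorem Matrix.fromCols_diagonal_mul_fromRows_diagonal {ι κ R : Type*} [Fintype ι]
    [Fintype κ] [DecidableEq ι] [DecidableEq κ] [CommSemiring R] (u : ι → R) (v : κ → R)
    (C D : Matrix ι κ R) :
    fromCols (diagonal u) D * fromRows C (diagonal v) =
      of fun i j => u i * C i j + D i j * v j := by
  ext i j
  rw [fromCols_mul_fromRows, add_apply, diagonal_mul, mul_diagonal, of_apply]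

theorem stmt2_general (K : Type*) [Field K]
    (n r : ℕ) (hrn : r ≤ n - 2)
    (a : Fin r → ℕ) (b : Fin (n - r) → ℕ)
    (P : Matrix (Fin r) (Fin (n - r)) (MvPolynomial (Fin 2) K))
    (hP : ∀ i j, (P i j).IsHomogeneous (a i + b j)) :
    ∃ (A : Matrix (Fin r) (Fin n) (MvPolynomial (Fin 2) K))
      (B : Matrix (Fin n) (Fin (n - r)) (MvPolynomial (Fin 2) K)),
      (∀ i j, (A i j).IsHomogeneous (a i)) ∧
      (∀ i j, (B i j).IsHomogeneous (b j)) ∧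
      P = A * B := by
  choose C D hC hD hCD using fun i j => (hP i j).exists_eq_X_pow_mul_add_mul_X_pow
  let e : Fin r ⊕ Fin (n - r) ≃ Fin n := finSumFinEquiv.trans (finCongr (by omega))
  have hx := isHomogeneous_diagonal_apply fun i => isHomogeneous_X_pow (R := K) (0 : Fin 2) (a i)
  have hy := isHomogeneous_diagonal_apply fun j => isHomogeneous_X_pow (R := K) (1 : Fin 2) (b j)
  refine ⟨(fromCols (diagonal fun i => X 0 ^ a i) (of D)).submatrix id e.symm,
    (fromRows (of C) (diagonal fun j => X 1 ^ b j)).submatrix e.symm id, ?_, ?_, ?_⟩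
  · intro i k
    obtain ⟨k, rfl⟩ := e.surjective k
    rw [submatrix_apply, Equiv.symm_apply_apply]
    rcases k with i' | j
    · exact (hx i i').1
    · exact hD i j
  · intro k j
    obtain ⟨k, rfl⟩ := e.surjective k
    rw [submatrix_apply, Equiv.symm_apply_apply]
    rcases k with i | j'
    · exact hC i j
    · exact (hy j' j).2
  · rw [submatrix_mul_equiv, submatrix_id_id, fromCols_diagonal_mul_fromRows_diagonal]
    exact ext hCD

/-- surjectivity of the composition map
`Φ : Hom(K, O^{⊕n}) × Hom(O^{⊕n}, E) → Hom(K, E)` in matrix form: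
every `r × (n-r)` matrix `P` over `K[x,y]` with `(i,j)` entry homogeneous of
degree `a_i + b_j` factors as `P = A * B` with `A` an `r × n` matrix whose
`(i,j)` entry is homogeneous of degree `a_i` and `B` an `n × (n-r)` matrix
whose `(i,j)` entry is homogeneous of degree `b_j`. -/
theorem stmt2 (K : Type*) [Field K] [IsAlgClosed K] [CharZero K]
    (n r : ℕ) (hn : 4 ≤ n) (hr2 : 2 ≤ r) (hrn : r ≤ n - 2)
    (a : Fin r → ℕ) (b : Fin (n - r) → ℕ)
    (P : Matrix (Fin r) (Fin (n - r)) (MvPolynomial (Fin 2) K))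
    (hP : ∀ i j, (P i j).IsHomogeneous (a i + b j)) :
    ∃ (A : Matrix (Fin r) (Fin n) (MvPolynomial (Fin 2) K))
      (B : Matrix (Fin n) (Fin (n - r)) (MvPolynomial (Fin 2) K)),
      (∀ i j, (A i j).IsHomogeneous (a i)) ∧
      (∀ i j, (B i j).IsHomogeneous (b j)) ∧
      P = A * B :=
  stmt2_general K n r hrn a b P hP
end

section
/- Let K be an algebraically closed field of characteristic zero, let n ≥ 4 and 2 ≤ r ≤ n−2, and let a_1 ≥ … ≥ a_r ≥ 0 and 0 ≤ b_1 ≤ … ≤ b_{n−r} be integers with a_1 + … + a_r = b_1 + … + b_{n−r} = e > 0. Then there exist an r × n matrix v over K[x,y] whose (i,j) entry is homogeneous of degree a_i, and an n × (n−r) matrix u over K[x,y] whose (i,j) entry is homogeneous of degree b_j, such that: (1) v · u = 0; (2) for every (x₀,y₀) ∈ K² with (x₀,y₀) ≠ (0,0), some r × r minor of v is nonzero when evaluated at (x₀,y₀); (3) for every (x₀,y₀) ∈ K² with (x₀,y₀) ≠ (0,0), some (n−r) × (n−r) minor of u is nonzero when evaluated at (x₀,y₀). (Equivalently, there is an exact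 sequence of vector bundles 0 → ⊕_j O_{P^1}(−b_j) →^u O_{P^1}^{⊕n} →^v ⊕_i O_{P^1}(a_i) → 0, so the locus M(b_•) ∩ M′(a_•) of morphisms P^1 → G(r,n) with prescribed splitting types of the restricted universal sub-bundle and quotient bundle is nonempty.) -/
/-!
Let `A i = a 0 + ⋯ + a (i-1)` and `B j = b 0 + ⋯ + b (j-1)`, two subdivisions of `[0, e]`.
Walk a lattice path through the cells `(i, j)` with `[A i, A (i+1)] ∩ [B j, B (j+1)] ≠ ∅`,
greedily leaving whichever interval ends first. Its `r + s - 1` cells are the gaps of a common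
refinement `0 = F 0 ≤ ⋯ ≤ F (r+s-1) = e`, whose `n = r + s` points index the columns of `v`
and the rows of `u`. Row `i` of `v` lives on the points bounding the gaps in path-row `i`, with
entries `x ^ (A (i+1) - F k) * y ^ (F k - A i)`; column `j` of `u` likewise, with entries
`(-1) ^ k * x ^ (F k - B j) * y ^ (B (j+1) - F k)`. A path-row and a path-column share either no
point or the two ends of one gap, and there the two products are the same monomial with
opposite signs, so `v * u = 0`. The first points of the rows of `v` give a triangular minor with
diagonal `x ^ a i`, their last points one with diagonal `y ^ a i`, and the same works for `u`.
-/

open Finset MvPolynomial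

def firstReach (f : ℕ → ℕ) (m i : ℕ) : ℕ :=
  Nat.find (⟨m, Or.inr le_rfl⟩ : ∃ k, i ≤ f k ∨ m ≤ k)

section FirstReach

variable {f : ℕ → ℕ} {m i : ℕ}

theorem firstReach_le : firstReach f m i ≤ m :=
  Nat.find_min' _ (Or.inr le_rfl)

theorem firstReach_spec : i ≤ f (firstReach f m i) ∨ m ≤ firstReach f m i :=
  Nat.find_spec (⟨m, Or.inr le_rfl⟩ : ∃ k, i ≤ f k ∨ m ≤ k)

theorem firstReach_eq_of_lt (h : ∀ k, f k < i) : firstReach f m i = m :=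
  le_antisymm firstReach_le (firstReach_spec.resolve_left (not_le.2 (h _)))

theorem apply_firstReach (hf0 : f 0 = 0) (hf : ∀ k, f (k + 1) ≤ f k + 1) (hi : i ≤ f m) :
    f (firstReach f m i) = i ∧ (firstReach f m i = 0 ∨ f (firstReach f m i - 1) + 1 = i) := by
  have hreach : i ≤ f (firstReach f m i) := by
    rcases firstReach_spec with h | h
    · exact h
    · rwa [le_antisymm firstReach_le h]
  rcases Nat.eq_zero_or_pos (firstReach f m i) with h0 | hpos
  · rw [h0, hf0] at hreach ⊢
    omega
  · have hbefore : ¬(i ≤ f (firstReach f m i - 1) ∨ m ≤ firstReach f m i - 1) :=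
      Nat.find_min _ (Nat.sub_lt hpos one_pos)
    have hstep := hf (firstReach f m i - 1)
    rw [Nat.sub_add_cancel hpos] at hstep
    omega

end FirstReach

theorem Matrix.injective_of_det_submatrix_id_ne_zero {ι κ S : Type*} [Fintype ι] [DecidableEq ι]
    [CommRing S] {M : Matrix ι κ S} {g : ι → κ} (h : (M.submatrix id g).det ≠ 0) :
    Function.Injective g := fun i j hij => by
  by_contra hne
  exact h (Matrix.det_zero_of_column_eq hne fun k => by simp [hij])

theorem Matrix.injective_of_det_submatrix_ne_zero_id {ι κ S : Type*} [Fintype ι] [DecidableEq ι]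
    [CommRing S] {M : Matrix κ ι S} {g : ι → κ} (h : (M.submatrix g id).det ≠ 0) :
    Function.Injective g := fun i j hij => by
  by_contra hne
  exact h (Matrix.det_zero_of_row_eq hne (by ext k; simp [hij]))

theorem Matrix.map_det_ne_zero_of_triangular {ι S R : Type*} [Fintype ι] [DecidableEq ι]
    [LinearOrder ι] [CommRing S] [CommRing R] [IsDomain R] (f : S →+* R) {M : Matrix ι ι S}
    (hM : M.IsUpperTriangular ∨ M.IsLowerTriangular) (hdiag : ∀ i, f (M i i) ≠ 0) :
    f M.det ≠ 0 := by
  rcases hM with hM | hM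
  · rw [Matrix.det_of_isUpperTriangular hM, map_prod]
    exact prod_ne_zero_iff.2 fun i _ => hdiag i
  · rw [Matrix.det_of_isLowerTriangular M hM, map_prod]
    exact prod_ne_zero_iff.2 fun i _ => hdiag i


namespace Staircase

structure Admissible (A B : ℕ → ℕ) (r s : ℕ) : Prop where
  monotone_A : Monotone A
  monotone_B : Monotone B
  A_zero : A 0 = 0
  B_zero : B 0 = 0
  A_le : ∀ i, A i ≤ A r
  B_le : ∀ j, B j ≤ B s
  A_eq_B : A r = B s
  r_pos : 0 < r
  s_pos : 0 < s

section Path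

variable (A B : ℕ → ℕ) (s : ℕ)

/-- Leave row `i` when its interval ends strictly first; the column index stays below `s`, so the
last step of the path is a row step. -/
def step (c : ℕ × ℕ) : ℕ × ℕ :=
  if c.2 + 1 = s ∨ A (c.1 + 1) < B (c.2 + 1) then (c.1 + 1, c.2) else (c.1, c.2 + 1)

def path (g : ℕ) : ℕ × ℕ :=
  (step A B s)^[g] (0, 0)

/-- The point `F k` of the common refinement: the left end of gap `k`. -/
def point (k : ℕ) : ℕ :=
  max (A (path A B s k).1) (B (path A B s k).2)

/-- Position `k` is the common end of gaps `k - 1` and `k`. -/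
abbrev OnRow (i k : ℕ) : Prop :=
  (path A B s k).1 = i ∨ (path A B s (k - 1)).1 = i

abbrev OnCol (j k : ℕ) : Prop :=
  (path A B s k).2 = j ∨ (path A B s (k - 1)).2 = j

/-- The first position of row `i`, capped at the last position `r + s - 1`; because of the cap,
`colStart A B s r s` is the last position of column `s - 1`. -/
def rowStart (r i : ℕ) : ℕ :=
  firstReach (fun k => (path A B s k).1) (r + s - 1) i

def colStart (r j : ℕ) : ℕ :=
  firstReach (fun k => (path A B s k).2) (r + s - 1) j

variable {A B s} {r : ℕ}

theorem path_zero : path A B s 0 = (0, 0) := rfl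

theorem path_succ (g : ℕ) : path A B s (g + 1) = step A B s (path A B s g) :=
  Function.iterate_succ_apply' _ _ _

theorem path_succ_cases (g : ℕ) :
    (path A B s (g + 1)).1 = (path A B s g).1 + 1 ∧ (path A B s (g + 1)).2 = (path A B s g).2 ∨
      (path A B s (g + 1)).1 = (path A B s g).1 ∧
        (path A B s (g + 1)).2 = (path A B s g).2 + 1 := by
  rw [path_succ, step]
  split_ifs <;> simp

theorem path_fst_add_snd (g : ℕ) : (path A B s g).1 + (path A B s g).2 = g := by
  induction g with
  | zero => rfl
  | succ g ih => have := path_succ_cases (A := A) (B := B) (s := s) g; omega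

theorem path_fst_succ_le (g : ℕ) : (path A B s (g + 1)).1 ≤ (path A B s g).1 + 1 := by
  have := path_succ_cases (A := A) (B := B) (s := s) g; omega

theorem path_snd_succ_le (g : ℕ) : (path A B s (g + 1)).2 ≤ (path A B s g).2 + 1 := by
  have := path_succ_cases (A := A) (B := B) (s := s) g; omega

theorem path_intervals_meet (hd : Admissible A B r s) (g : ℕ) :
    B (path A B s g).2 ≤ A ((path A B s g).1 + 1) ∧
      A (path A B s g).1 ≤ B ((path A B s g).2 + 1) := by
  induction g with
  | zero => simp [path_zero, hd.A_zero, hd.B_zero]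
  | succ g ih =>
    rw [path_succ]
    generalize path A B s g = c at ih
    obtain ⟨i, j⟩ := c
    simp only [step]
    split_ifs with h
    · refine ⟨ih.1.trans (hd.monotone_A (Nat.le_succ _)), ?_⟩
      rcases h with h | h
      · rw [h, ← hd.A_eq_B]
        exact hd.A_le _
      · exact h.le
    · push Not at h
      exact ⟨h.2, ih.2.trans (hd.monotone_B (Nat.le_succ _))⟩

theorem path_snd_lt (hd : Admissible A B r s) (g : ℕ) : (path A B s g).2 < s := by
  induction g with
  | zero => exact hd.s_pos
  | succ g ih =>
    rw [path_succ]
    generalize path A B s g = c at ih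
    simp only [step]
    split_ifs with h
    · exact ih
    · push Not at h
      exact lt_of_le_of_ne ih h.1

theorem path_fst_lt_or (hd : Admissible A B r s) (g : ℕ) :
    (path A B s g).1 < r ∨ (path A B s g).2 + 1 = s := by
  induction g with
  | zero => exact Or.inl hd.r_pos
  | succ g ih =>
    rw [path_succ]
    generalize path A B s g = c at ih
    obtain ⟨i, j⟩ := c
    simp only [step]
    split_ifs with h
    · dsimp only at ih ⊢
      rcases h with h | h
      · exact Or.inr h
      · refine ih.imp_left fun hi => lt_of_le_of_ne hi fun hr => ?_
        rw [hr, hd.A_eq_B] at h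
        exact absurd h (not_lt.2 (hd.B_le _))
    · push Not at h
      exact ih.imp_right fun h' => absurd h' h.1

theorem path_pred_last (hd : Admissible A B r s) : path A B s (r + s - 2) = (r - 1, s - 1) := by
  have h1 := path_fst_lt_or hd (r + s - 2)
  have h2 := path_snd_lt hd (r + s - 2)
  have h3 := path_fst_add_snd (A := A) (B := B) (s := s) (r + s - 2)
  have := hd.r_pos
  ext <;> (simp only; omega)

theorem path_last (hd : Admissible A B r s) : path A B s (r + s - 1) = (r, s - 1) := by
  have := hd.r_pos
  have := hd.s_pos
  rw [show r + s - 1 = r + s - 2 + 1 by omega, path_succ, path_pred_last hd, step,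
    if_pos (Or.inl (by omega))]
  simp only [Prod.mk.injEq, and_true]
  omega

theorem point_eq_A (hd : Admissible A B r s) {k : ℕ}
    (hk : k = 0 ∨ (path A B s (k - 1)).1 + 1 = (path A B s k).1) :
    point A B s k = A (path A B s k).1 := by
  rcases k with _ | g
  · simp [point, path_zero, hd.A_zero, hd.B_zero]
  · have := path_succ_cases (A := A) (B := B) (s := s) g
    simp only [Nat.add_sub_cancel] at hk
    have hrow : (path A B s (g + 1)).1 = (path A B s g).1 + 1 ∧
        (path A B s (g + 1)).2 = (path A B s g).2 := by omega
    rw [point, hrow.1, hrow.2, max_eq_left (path_intervals_meet hd g).1]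

theorem point_eq_B (hd : Admissible A B r s) {k : ℕ}
    (hk : k = 0 ∨ (path A B s (k - 1)).2 + 1 = (path A B s k).2) :
    point A B s k = B (path A B s k).2 := by
  rcases k with _ | g
  · simp [point, path_zero, hd.A_zero, hd.B_zero]
  · have := path_succ_cases (A := A) (B := B) (s := s) g
    simp only [Nat.add_sub_cancel] at hk
    have hcol : (path A B s (g + 1)).1 = (path A B s g).1 ∧
        (path A B s (g + 1)).2 = (path A B s g).2 + 1 := by omega
    rw [point, hcol.1, hcol.2, max_eq_right (path_intervals_meet hd g).2]

theorem point_mem_row (hd : Admissible A B r s) {i k : ℕ} (h : OnRow A B s i k) :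
    A i ≤ point A B s k ∧ point A B s k ≤ A (i + 1) := by
  by_cases hk : (path A B s k).1 = i
  · rw [point, hk]
    refine ⟨le_max_left _ _, max_le (hd.monotone_A (Nat.le_succ i)) ?_⟩
    rw [← hk]
    exact (path_intervals_meet hd k).1
  · have hprev : (path A B s (k - 1)).1 = i := h.resolve_left hk
    obtain ⟨g, rfl⟩ : ∃ g, k = g + 1 :=
      Nat.exists_eq_succ_of_ne_zero (by rintro rfl; exact hk hprev)
    have hcases := path_succ_cases (A := A) (B := B) (s := s) g
    simp only [Nat.add_sub_cancel] at hprev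
    have hnext : (path A B s (g + 1)).1 = i + 1 := by omega
    rw [point_eq_A hd (Or.inr (by simp only [Nat.add_sub_cancel]; omega)), hnext]
    exact ⟨hd.monotone_A (Nat.le_succ i), le_rfl⟩

theorem point_mem_col (hd : Admissible A B r s) {j k : ℕ} (h : OnCol A B s j k) :
    B j ≤ point A B s k ∧ point A B s k ≤ B (j + 1) := by
  by_cases hk : (path A B s k).2 = j
  · rw [point, hk]
    refine ⟨le_max_right _ _, max_le ?_ (hd.monotone_B (Nat.le_succ j))⟩
    rw [← hk]
    exact (path_intervals_meet hd k).2
  · have hprev : (path A B s (k - 1)).2 = j := h.resolve_left hk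
    obtain ⟨g, rfl⟩ : ∃ g, k = g + 1 :=
      Nat.exists_eq_succ_of_ne_zero (by rintro rfl; exact hk hprev)
    have hcases := path_succ_cases (A := A) (B := B) (s := s) g
    simp only [Nat.add_sub_cancel] at hprev
    have hnext : (path A B s (g + 1)).2 = j + 1 := by omega
    rw [point_eq_B hd (Or.inr (by simp only [Nat.add_sub_cancel]; omega)), hnext]
    exact ⟨hd.monotone_B (Nat.le_succ j), le_rfl⟩

theorem onRow_and_onCol_iff {i j k : ℕ} :
    OnRow A B s i k ∧ OnCol A B s j k ↔
      path A B s (i + j) = (i, j) ∧ (k = i + j ∨ k = i + j + 1) := by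
  constructor
  · rintro ⟨hrow, hcol⟩
    rcases k with _ | g
    · simp only [path_zero, or_self] at hrow hcol
      subst hrow hcol
      exact ⟨rfl, Or.inl rfl⟩
    · have hcases := path_succ_cases (A := A) (B := B) (s := s) g
      simp only [OnRow, OnCol, Nat.add_sub_cancel] at hrow hcol
      have hcell : ((path A B s (g + 1)).1 = i ∧ (path A B s (g + 1)).2 = j) ∨
          ((path A B s g).1 = i ∧ (path A B s g).2 = j) := by omega
      rcases hcell with ⟨h1, h2⟩ | ⟨h1, h2⟩
      · have hg := path_fst_add_snd (A := A) (B := B) (s := s) (g + 1)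
        rw [h1, h2] at hg
        rw [hg]
        exact ⟨Prod.ext (hg ▸ h1) (hg ▸ h2), Or.inl rfl⟩
      · have hg := path_fst_add_snd (A := A) (B := B) (s := s) g
        rw [h1, h2] at hg
        subst hg
        exact ⟨Prod.ext h1 h2, Or.inr rfl⟩
  · rintro ⟨hcell, rfl | rfl⟩
    · simp [OnRow, OnCol, hcell]
    · simp [OnRow, OnCol, hcell]

theorem path_rowStart (hd : Admissible A B r s) {i : ℕ} (hi : i ≤ r) :
    (path A B s (rowStart A B s r i)).1 = i ∧
      (rowStart A B s r i = 0 ∨ (path A B s (rowStart A B s r i - 1)).1 + 1 = i) :=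
  apply_firstReach (f := fun k => (path A B s k).1) rfl path_fst_succ_le
    (by rw [path_last hd]; exact hi)

theorem path_colStart (hd : Admissible A B r s) {j : ℕ} (hj : j < s) :
    (path A B s (colStart A B s r j)).2 = j ∧
      (colStart A B s r j = 0 ∨ (path A B s (colStart A B s r j - 1)).2 + 1 = j) :=
  apply_firstReach (f := fun k => (path A B s k).2) rfl path_snd_succ_le
    (by rw [path_last hd]; dsimp only; omega)

theorem colStart_self (hd : Admissible A B r s) : colStart A B s r s = r + s - 1 :=
  firstReach_eq_of_lt (path_snd_lt hd)

theorem onRow_rowStart (hd : Admissible A B r s) {i i' : ℕ} (hi : i ≤ r) :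
    OnRow A B s i' (rowStart A B s r i) ↔ i' = i ∨ i' + 1 = i := by
  obtain ⟨h1, h0 | h2⟩ := path_rowStart hd hi
  · rw [h0] at h1 ⊢
    simp only [path_zero, or_self] at h1 ⊢
    omega
  · simp only [OnRow]
    omega

theorem onCol_colStart (hd : Admissible A B r s) {j j' : ℕ} (hj : j ≤ s) :
    OnCol A B s j' (colStart A B s r j) ↔ (j' = j ∧ j < s) ∨ j' + 1 = j := by
  rcases hj.lt_or_eq with hj | hj
  · obtain ⟨h1, h0 | h2⟩ := path_colStart hd hj
    · rw [h0] at h1 ⊢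
      simp only [path_zero, or_self] at h1 ⊢
      omega
    · simp only [OnCol]
      omega
  · rw [hj]
    have := hd.r_pos
    have := hd.s_pos
    have hpred : r + s - 1 - 1 = r + s - 2 := by omega
    simp only [OnCol, colStart_self hd, path_last hd, hpred, path_pred_last hd]
    omega

theorem point_rowStart (hd : Admissible A B r s) {i : ℕ} (hi : i ≤ r) :
    point A B s (rowStart A B s r i) = A i := by
  obtain ⟨h1, h2⟩ := path_rowStart hd hi
  rw [point_eq_A hd (h2.imp_right fun h => h.trans h1.symm), h1]

theorem point_colStart (hd : Admissible A B r s) {j : ℕ} (hj : j ≤ s) :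
    point A B s (colStart A B s r j) = B j := by
  rcases hj.lt_or_eq with hj | hj
  · obtain ⟨h1, h2⟩ := path_colStart hd hj
    rw [point_eq_B hd (h2.imp_right fun h => h.trans h1.symm), h1]
  · rw [hj, colStart_self hd, point, path_last hd, ← hd.A_eq_B]
    exact max_eq_left (hd.B_le _ |>.trans hd.A_eq_B.ge)

end Path

section Matrices

variable (R : Type*) [CommRing R] (A B : ℕ → ℕ) (s : ℕ)

noncomputable def xy (p q : ℕ) : MvPolynomial (Fin 2) R :=
  X 0 ^ p * X 1 ^ q

noncomputable def surjEntry (i k : ℕ) : MvPolynomial (Fin 2) R :=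
  if OnRow A B s i k then xy R (A (i + 1) - point A B s k) (point A B s k - A i) else 0

noncomputable def injEntry (k j : ℕ) : MvPolynomial (Fin 2) R :=
  if OnCol A B s j k then (-1) ^ k * xy R (point A B s k - B j) (B (j + 1) - point A B s k)
  else 0

noncomputable def surjMatrix (r n : ℕ) : Matrix (Fin r) (Fin n) (MvPolynomial (Fin 2) R) :=
  Matrix.of fun i k => surjEntry R A B s i k

noncomputable def injMatrix (n : ℕ) : Matrix (Fin n) (Fin s) (MvPolynomial (Fin 2) R) :=
  Matrix.of fun k j => injEntry R A B s k j

variable {R A B s} {r : ℕ}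

theorem isHomogeneous_xy (p q : ℕ) : (xy R p q).IsHomogeneous (p + q) :=
  (isHomogeneous_X_pow _ _).mul (isHomogeneous_X_pow _ _)

theorem xy_mul_xy (p q p' q' : ℕ) : xy R p q * xy R p' q' = xy R (p + p') (q + q') := by
  simp only [xy, pow_add]
  ring

theorem eval_xy (x y : R) (p q : ℕ) : eval ![x, y] (xy R p q) = x ^ p * y ^ q := by
  simp [xy]

theorem surjEntry_isHomogeneous (hd : Admissible A B r s) (i k : ℕ) :
    (surjEntry R A B s i k).IsHomogeneous (A (i + 1) - A i) := by
  rw [surjEntry]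
  split_ifs with h
  · have := point_mem_row hd h
    convert isHomogeneous_xy (R := R) _ _ using 1
    omega
  · exact isHomogeneous_zero _ _ _

theorem injEntry_isHomogeneous (hd : Admissible A B r s) (k j : ℕ) :
    (injEntry R A B s k j).IsHomogeneous (B (j + 1) - B j) := by
  rw [injEntry]
  split_ifs with h
  · have := point_mem_col hd h
    have hsign : ((-1) ^ k : MvPolynomial (Fin 2) R).IsHomogeneous 0 := by
      simpa using (isHomogeneous_one (Fin 2) R).neg.pow k
    convert hsign.mul (isHomogeneous_xy (R := R) _ _) using 1
    omega
  · exact isHomogeneous_zero _ _ _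

theorem surjEntry_mul_injEntry (hd : Admissible A B r s) (i j k : ℕ) :
    surjEntry R A B s i k * injEntry R A B s k j =
      if path A B s (i + j) = (i, j) ∧ (k = i + j ∨ k = i + j + 1) then
        (-1) ^ k * xy R (A (i + 1) - B j) (B (j + 1) - A i)
      else 0 := by
  by_cases hrow : OnRow A B s i k
  · by_cases hcol : OnCol A B s j k
    · have := point_mem_row hd hrow
      have := point_mem_col hd hcol
      rw [surjEntry, injEntry, if_pos hrow, if_pos hcol,
        if_pos (onRow_and_onCol_iff.1 ⟨hrow, hcol⟩), mul_left_comm, xy_mul_xy]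
      congr 3 <;> omega
    · rw [injEntry, if_neg hcol, if_neg fun h => hcol (onRow_and_onCol_iff.2 h).2, mul_zero]
  · rw [surjEntry, if_neg hrow, if_neg fun h => hrow (onRow_and_onCol_iff.2 h).1, zero_mul]

theorem surjMatrix_mul_injMatrix (hd : Admissible A B r s) {n : ℕ} (hn : r + s = n) :
    surjMatrix R A B s r n * injMatrix R A B s n = 0 := by
  refine Matrix.ext fun i j => ?_
  simp only [Matrix.mul_apply, surjMatrix, injMatrix, Matrix.of_apply, Matrix.zero_apply,
    surjEntry_mul_injEntry hd]
  by_cases hcell : path A B s (i + j) = ((i : ℕ), (j : ℕ))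
  · have hlt : (i : ℕ) + j + 1 < n := by omega
    rw [sum_eq_add_of_mem ⟨i + j, by omega⟩ ⟨i + j + 1, hlt⟩ (mem_univ _) (mem_univ _)
      (by simp [Fin.ext_iff])]
    · simp only [hcell, true_and, true_or, or_true, if_true]
      ring
    · intro k _ hk
      rw [if_neg]
      simp only [ne_eq, Fin.ext_iff] at hk
      omega
  · exact sum_eq_zero fun k _ => if_neg fun h => hcell h.1

theorem surjEntry_eq_zero {i k : ℕ} (h : ¬OnRow A B s i k) : surjEntry R A B s i k = 0 :=
  if_neg h

theorem injEntry_eq_zero {k j : ℕ} (h : ¬OnCol A B s j k) : injEntry R A B s k j = 0 :=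
  if_neg h

theorem surjEntry_rowStart (hd : Admissible A B r s) {i : ℕ} (hi : i < r) :
    surjEntry R A B s i (rowStart A B s r i) = xy R (A (i + 1) - A i) 0 := by
  rw [surjEntry, if_pos ((onRow_rowStart hd hi.le).2 (Or.inl rfl)), point_rowStart hd hi.le,
    Nat.sub_self]

theorem surjEntry_rowStart_succ (hd : Admissible A B r s) {i : ℕ} (hi : i < r) :
    surjEntry R A B s i (rowStart A B s r (i + 1)) = xy R 0 (A (i + 1) - A i) := by
  rw [surjEntry, if_pos ((onRow_rowStart hd hi).2 (Or.inr rfl)), point_rowStart hd hi,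
    Nat.sub_self]

theorem injEntry_colStart (hd : Admissible A B r s) {j : ℕ} (hj : j < s) :
    injEntry R A B s (colStart A B s r j) j =
      (-1) ^ colStart A B s r j * xy R 0 (B (j + 1) - B j) := by
  rw [injEntry, if_pos ((onCol_colStart hd hj.le).2 (Or.inl ⟨rfl, hj⟩)),
    point_colStart hd hj.le, Nat.sub_self]

theorem injEntry_colStart_succ (hd : Admissible A B r s) {j : ℕ} (hj : j < s) :
    injEntry R A B s (colStart A B s r (j + 1)) j =
      (-1) ^ colStart A B s r (j + 1) * xy R (B (j + 1) - B j) 0 := by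
  rw [injEntry, if_pos ((onCol_colStart hd hj).2 (Or.inr rfl)), point_colStart hd hj,
    Nat.sub_self]

variable [IsDomain R]

theorem exists_surjMinor_ne_zero (hd : Admissible A B r s) {n : ℕ} (hn : r + s = n) {x y : R}
    (hxy : (x, y) ≠ (0, 0)) :
    ∃ g : Fin r → Fin n, Function.Injective g ∧
      eval ![x, y] ((surjMatrix R A B s r n).submatrix id g).det ≠ 0 := by
  suffices ∃ g : Fin r → Fin n,
      eval ![x, y] ((surjMatrix R A B s r n).submatrix id g).det ≠ 0 by
    obtain ⟨g, hg⟩ := this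
    exact ⟨g, Matrix.injective_of_det_submatrix_id_ne_zero (ne_zero_of_map hg), hg⟩
  have hstart : ∀ i ≤ r, rowStart A B s r i < n := fun i _ => by
    have := firstReach_le (f := fun k => (path A B s k).1) (m := r + s - 1) (i := i)
    have := hd.s_pos
    rw [rowStart]
    omega
  by_cases hx : x = 0
  · have hy : y ≠ 0 := by rintro rfl; exact hxy (by rw [hx])
    refine ⟨fun i => ⟨rowStart A B s r (i + 1), hstart _ i.isLt⟩,
      Matrix.map_det_ne_zero_of_triangular _ (Or.inr fun i i' hii' => ?_) fun i => ?_⟩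
    · have hlt : (i : ℕ) < i' := OrderDual.toDual_lt_toDual.1 hii'
      show surjEntry R A B s i (rowStart A B s r (i' + 1)) = 0
      refine surjEntry_eq_zero fun h => ?_
      rw [onRow_rowStart hd i'.isLt] at h
      omega
    · simp only [surjMatrix, Matrix.submatrix_apply, id_eq, Matrix.of_apply,
        surjEntry_rowStart_succ hd i.isLt, eval_xy]
      simpa using pow_ne_zero _ hy
  · refine ⟨fun i => ⟨rowStart A B s r i, hstart _ i.isLt.le⟩,
      Matrix.map_det_ne_zero_of_triangular _ (Or.inl fun i i' hii' => ?_) fun i => ?_⟩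
    · have hlt : (i' : ℕ) < i := hii'
      show surjEntry R A B s i (rowStart A B s r i') = 0
      refine surjEntry_eq_zero fun h => ?_
      rw [onRow_rowStart hd i'.isLt.le] at h
      omega
    · simp only [surjMatrix, Matrix.submatrix_apply, id_eq, Matrix.of_apply,
        surjEntry_rowStart hd i.isLt, eval_xy]
      simpa using pow_ne_zero _ hx

theorem exists_injMinor_ne_zero (hd : Admissible A B r s) {n : ℕ} (hn : r + s = n) {x y : R}
    (hxy : (x, y) ≠ (0, 0)) :
    ∃ g : Fin s → Fin n, Function.Injective g ∧
      eval ![x, y] ((injMatrix R A B s n).submatrix g id).det ≠ 0 := by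
  suffices ∃ g : Fin s → Fin n, eval ![x, y] ((injMatrix R A B s n).submatrix g id).det ≠ 0 by
    obtain ⟨g, hg⟩ := this
    exact ⟨g, Matrix.injective_of_det_submatrix_ne_zero_id (ne_zero_of_map hg), hg⟩
  have hstart : ∀ j ≤ s, colStart A B s r j < n := fun j _ => by
    have := firstReach_le (f := fun k => (path A B s k).2) (m := r + s - 1) (i := j)
    have := hd.s_pos
    rw [colStart]
    omega
  by_cases hy : y = 0
  · have hx : x ≠ 0 := by rintro rfl; exact hxy (by rw [hy])
    refine ⟨fun j => ⟨colStart A B s r (j + 1), hstart _ j.isLt⟩,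
      Matrix.map_det_ne_zero_of_triangular _ (Or.inl fun j j' hjj' => ?_) fun j => ?_⟩
    · have hlt : (j' : ℕ) < j := hjj'
      show injEntry R A B s (colStart A B s r (j + 1)) j' = 0
      refine injEntry_eq_zero fun h => ?_
      rw [onCol_colStart hd j.isLt] at h
      omega
    · simp only [injMatrix, Matrix.submatrix_apply, id_eq, Matrix.of_apply,
        injEntry_colStart_succ hd j.isLt, map_mul, eval_xy]
      simpa using pow_ne_zero _ hx
  · refine ⟨fun j => ⟨colStart A B s r j, hstart _ j.isLt.le⟩,
      Matrix.map_det_ne_zero_of_triangular _ (Or.inr fun j j' hjj' => ?_) fun j => ?_⟩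
    · have hlt : (j : ℕ) < j' := OrderDual.toDual_lt_toDual.1 hjj'
      show injEntry R A B s (colStart A B s r j) j' = 0
      refine injEntry_eq_zero fun h => ?_
      rw [onCol_colStart hd j.isLt.le] at h
      omega
    · simp only [injMatrix, Matrix.submatrix_apply, id_eq, Matrix.of_apply,
        injEntry_colStart hd j.isLt, map_mul, eval_xy]
      simpa using pow_ne_zero _ hy

end Matrices

end Staircase

def partialSum {r : ℕ} (a : Fin r → ℕ) (i : ℕ) : ℕ :=
  ∑ t ∈ range i, if h : t < r then a ⟨t, h⟩ else 0

theorem partialSum_succ_sub {r : ℕ} (a : Fin r → ℕ) (i : Fin r) :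
    partialSum a (i + 1) - partialSum a i = a i := by
  simp [partialSum, sum_range_succ]

theorem partialSum_self {r : ℕ} (a : Fin r → ℕ) : partialSum a r = ∑ t, a t := by
  rw [partialSum, ← Fin.sum_univ_eq_sum_range (fun t => if h : t < r then a ⟨t, h⟩ else 0)]
  simp

theorem partialSum_le_self {r : ℕ} (a : Fin r → ℕ) (i : ℕ) :
    partialSum a i ≤ partialSum a r :=
  sum_le_sum_of_ne_zero fun t _ ht => mem_range.2 (by by_contra h; simp [h] at ht)

theorem Staircase.admissible_partialSum {r s e : ℕ} {a : Fin r → ℕ} {b : Fin s → ℕ}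
    (hae : ∑ i, a i = e) (hbe : ∑ j, b j = e) (he : 0 < e) :
    Staircase.Admissible (partialSum a) (partialSum b) r s where
  monotone_A _ _ h := sum_le_sum_of_subset (range_subset_range.2 h)
  monotone_B _ _ h := sum_le_sum_of_subset (range_subset_range.2 h)
  A_zero := rfl
  B_zero := rfl
  A_le := partialSum_le_self a
  B_le := partialSum_le_self b
  A_eq_B := by rw [partialSum_self, partialSum_self, hae, hbe]
  r_pos := Nat.pos_of_ne_zero fun h => by subst h; simp at hae; omega
  s_pos := Nat.pos_of_ne_zero fun h => by subst h; simp at hbe; omega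

theorem stmt3_general (K : Type*) [Field K]
    (n r e : ℕ)
    (a : Fin r → ℕ) (b : Fin (n - r) → ℕ)
    (hae : ∑ i, a i = e) (hbe : ∑ j, b j = e) (he : 0 < e) :
    ∃ (v : Matrix (Fin r) (Fin n) (MvPolynomial (Fin 2) K))
      (u : Matrix (Fin n) (Fin (n - r)) (MvPolynomial (Fin 2) K)),
      (∀ i j, (v i j).IsHomogeneous (a i)) ∧
      (∀ i j, (u i j).IsHomogeneous (b j)) ∧
      v * u = 0 ∧
      (∀ x₀ y₀ : K, (x₀, y₀) ≠ (0, 0) →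
        ∃ g : Fin r → Fin n, Function.Injective g ∧
          MvPolynomial.eval ![x₀, y₀] (v.submatrix id g).det ≠ 0) ∧
      (∀ x₀ y₀ : K, (x₀, y₀) ≠ (0, 0) →
        ∃ g : Fin (n - r) → Fin n, Function.Injective g ∧
          MvPolynomial.eval ![x₀, y₀] (u.submatrix g id).det ≠ 0) := by
  open Staircase in
  have hd := admissible_partialSum hae hbe he
  have hn : r + (n - r) = n := by have := hd.s_pos; omega
  refine ⟨surjMatrix K (partialSum a) (partialSum b) (n - r) r n,
    injMatrix K (partialSum a) (partialSum b) (n - r) n, fun i k => ?_, fun k j => ?_,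
    surjMatrix_mul_injMatrix hd hn, fun _ _ => exists_surjMinor_ne_zero hd hn,
    fun _ _ => exists_injMinor_ne_zero hd hn⟩
  · rw [← partialSum_succ_sub a i]
    exact surjEntry_isHomogeneous hd i k
  · rw [← partialSum_succ_sub b j]
    exact injEntry_isHomogeneous hd k j

/-- existence of an exact sequence
`0 → ⊕_j O(-b_j) →ᵘ O^{⊕n} →ᵛ ⊕_i O(a_i) → 0`, expressed via matrices of
homogeneous polynomials: `v * u = 0`, at every point of `P^1` some maximal
minor of `v` is nonzero (surjectivity of `v`), and at every point some maximal
minor of `u` is nonzero (injectivity of `u` with locally free cokernel).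
Hence the locus `M(b_•) ∩ M'(a_•)` is nonempty. -/
theorem stmt3 (K : Type*) [Field K] [IsAlgClosed K] [CharZero K]
    (n r e : ℕ) (hn : 4 ≤ n) (hr2 : 2 ≤ r) (hrn : r ≤ n - 2)
    (a : Fin r → ℕ) (b : Fin (n - r) → ℕ)
    (ha : Antitone a) (hb : Monotone b)
    (hae : ∑ i, a i = e) (hbe : ∑ j, b j = e) (he : 0 < e) :
    ∃ (v : Matrix (Fin r) (Fin n) (MvPolynomial (Fin 2) K))
      (u : Matrix (Fin n) (Fin (n - r)) (MvPolynomial (Fin 2) K)),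
      (∀ i j, (v i j).IsHomogeneous (a i)) ∧
      (∀ i j, (u i j).IsHomogeneous (b j)) ∧
      v * u = 0 ∧
      (∀ x₀ y₀ : K, (x₀, y₀) ≠ (0, 0) →
        ∃ g : Fin r → Fin n, Function.Injective g ∧
          MvPolynomial.eval ![x₀, y₀] (v.submatrix id g).det ≠ 0) ∧
      (∀ x₀ y₀ : K, (x₀, y₀) ≠ (0, 0) →
        ∃ g : Fin (n - r) → Fin n, Function.Injective g ∧
          MvPolynomial.eval ![x₀, y₀] (u.submatrix g id).det ≠ 0) :=
  stmt3_general K n r e a b hae hbe he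
end

section
/- Let K be a field and let a_1 ≥ a_2 ≥ 0 and 0 ≤ b_1 ≤ b_2 be integers with a_1 + a_2 = b_1 + b_2 (whence necessarily a_1 ≥ b_1; assume b_1 ≤ a_1). In K[x,y], define the 2 × 4 matrix v with rows (x^{a_1}, y^{a_1}, 0, x^{a_1−b_1}y^{b_1}) and (0, x^{a_2}, y^{a_2}, 0), and the 4 × 2 matrix u with rows (−y^{b_1}, 0), (0, x^{a_1−b_1}y^{a_2}), (0, −x^{b_2}), (x^{b_1}, −y^{b_2}). Then: (1) v · u = 0; (2) the 2 × 2 minor of v on columns {1,2} equals x^{a_1+a_2} and the minor on columns {2,3} equals y^{a_1+a_2}; (3) the 2 × 2 minor of u on rows {1,4} equals y^{b_1+b_2} and the minor on rows {3,4} equals x^{b_1+b_2}. In particular, v is surjective and u is injective as maps of sheaves on P^1, giving an exact sequence 0 → O(−b_1) ⊕ O(−b_2) →^u O^{⊕4} →^v O(a_1) ⊕ O(a_2) → 0. -/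
open MvPolynomial

namespace SplittingP1

variable {R : Type*} [CommRing R] (x y : R)

def v (a1 a2 b1 : ℕ) : Matrix (Fin 2) (Fin 4) R :=
  !![x ^ a1, y ^ a1, 0, x ^ (a1 - b1) * y ^ b1;
     0, x ^ a2, y ^ a2, 0]

def u (a1 a2 b1 b2 : ℕ) : Matrix (Fin 4) (Fin 2) R :=
  !![-(y ^ b1), 0;
     0, x ^ (a1 - b1) * y ^ a2;
     0, -(x ^ b2);
     x ^ b1, -(y ^ b2)]

theorem v_mul_u {a1 a2 b1 b2 : ℕ} (hsum : a1 + a2 = b1 + b2) (hb1 : b1 ≤ a1) :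
    v x y a1 a2 b1 * u x y a1 a2 b1 b2 = 0 := by
  -- With `a₁ = b₁ + c` the degree condition reads `b₂ = a₂ + c`, and every entry is a ring identity.
  obtain ⟨c, rfl⟩ := Nat.exists_eq_add_of_le hb1
  obtain rfl : b2 = a2 + c := by omega
  ext i j
  fin_cases i <;> fin_cases j <;>
    simp [v, u, Matrix.mul_apply, Fin.sum_univ_four] <;> ring

theorem det_v_submatrix_zero_one (a1 a2 b1 : ℕ) :
    ((v x y a1 a2 b1).submatrix id ![0, 1]).det = x ^ (a1 + a2) := by
  rw [Matrix.det_fin_two]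
  simp [v, pow_add]

theorem det_v_submatrix_one_two (a1 a2 b1 : ℕ) :
    ((v x y a1 a2 b1).submatrix id ![1, 2]).det = y ^ (a1 + a2) := by
  rw [Matrix.det_fin_two]
  simp [v, pow_add]

theorem det_u_submatrix_zero_three (a1 a2 b1 b2 : ℕ) :
    ((u x y a1 a2 b1 b2).submatrix ![0, 3] id).det = y ^ (b1 + b2) := by
  rw [Matrix.det_fin_two]
  simp [u, pow_add]

theorem det_u_submatrix_two_three (a1 a2 b1 b2 : ℕ) :
    ((u x y a1 a2 b1 b2).submatrix ![2, 3] id).det = x ^ (b1 + b2) := by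
  rw [Matrix.det_fin_two]
  simp [u, pow_add, mul_comm]

end SplittingP1

theorem stmt4_general (K : Type*) [Field K] (a1 a2 b1 b2 : ℕ)
    (hsum : a1 + a2 = b1 + b2) (hb1 : b1 ≤ a1)
    (v : Matrix (Fin 2) (Fin 4) (MvPolynomial (Fin 2) K))
    (u : Matrix (Fin 4) (Fin 2) (MvPolynomial (Fin 2) K))
    (hv : v = !![X 0 ^ a1, X 1 ^ a1, 0, X 0 ^ (a1 - b1) * X 1 ^ b1;
                 0, X 0 ^ a2, X 1 ^ a2, 0])
    (hu : u = !![-(X 1 ^ b1), 0;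
                 0, X 0 ^ (a1 - b1) * X 1 ^ a2;
                 0, -(X 0 ^ b2);
                 X 0 ^ b1, -(X 1 ^ b2)]) :
    v * u = 0 ∧
    (v.submatrix id ![0, 1]).det = X 0 ^ (a1 + a2) ∧
    (v.submatrix id ![1, 2]).det = X 1 ^ (a1 + a2) ∧
    (u.submatrix ![0, 3] id).det = X 1 ^ (b1 + b2) ∧
    (u.submatrix ![2, 3] id).det = X 0 ^ (b1 + b2) := by
  obtain rfl : v = SplittingP1.v (X 0) (X 1) a1 a2 b1 := hv
  obtain rfl : u = SplittingP1.u (X 0) (X 1) a1 a2 b1 b2 := hu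
  exact ⟨SplittingP1.v_mul_u _ _ hsum hb1, SplittingP1.det_v_submatrix_zero_one ..,
    SplittingP1.det_v_submatrix_one_two .., SplittingP1.det_u_submatrix_zero_three ..,
    SplittingP1.det_u_submatrix_two_three ..⟩

/-- the explicit matrices `v` and `u` realizing the exact sequence
`0 → O(-b_1) ⊕ O(-b_2) →ᵘ O^{⊕4} →ᵛ O(a_1) ⊕ O(a_2) → 0` satisfy
`v * u = 0`, the `2×2` minors of `v` on columns `{1,2}` and `{2,3}` are
`x^{a_1+a_2}` and `y^{a_1+a_2}`, and the `2×2` minors of `u` on rows `{1,4}`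
and `{3,4}` are `y^{b_1+b_2}` and `x^{b_1+b_2}`. -/
theorem stmt4 (K : Type*) [Field K] (a1 a2 b1 b2 : ℕ)
    (ha : a2 ≤ a1) (hb : b1 ≤ b2) (hsum : a1 + a2 = b1 + b2) (hb1 : b1 ≤ a1)
    (v : Matrix (Fin 2) (Fin 4) (MvPolynomial (Fin 2) K))
    (u : Matrix (Fin 4) (Fin 2) (MvPolynomial (Fin 2) K))
    (hv : v = !![X 0 ^ a1, X 1 ^ a1, 0, X 0 ^ (a1 - b1) * X 1 ^ b1;
                 0, X 0 ^ a2, X 1 ^ a2, 0])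
    (hu : u = !![-(X 1 ^ b1), 0;
                 0, X 0 ^ (a1 - b1) * X 1 ^ a2;
                 0, -(X 0 ^ b2);
                 X 0 ^ b1, -(X 1 ^ b2)]) :
    v * u = 0 ∧
    (v.submatrix id ![0, 1]).det = X 0 ^ (a1 + a2) ∧
    (v.submatrix id ![1, 2]).det = X 1 ^ (a1 + a2) ∧
    (u.submatrix ![0, 3] id).det = X 1 ^ (b1 + b2) ∧
    (u.submatrix ![2, 3] id).det = X 0 ^ (b1 + b2) :=
  stmt4_general K a1 a2 b1 b2 hsum hb1 v u hv hu
end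

section
/- Let K be an algebraically closed field of characteristic zero, let a_1 ≥ a_2 ≥ 0 and 0 ≤ b_1 ≤ b_2 be integers with a_1 + a_2 = b_1 + b_2 and b_1 ≤ a_1. Let v be the 2 × 4 matrix over K[x,y] with rows (x^{a_1}, y^{a_1}, 0, x^{a_1−b_1}y^{b_1}) and (0, x^{a_2}, y^{a_2}, 0), and let u be the 4 × 2 matrix with rows (−y^{b_1}, 0), (0, x^{a_1−b_1}y^{a_2}), (0, −x^{b_2}), (x^{b_1}, −y^{b_2}). Then for every 2 × 2 matrix P over K[x,y] whose (i,j) entry is homogeneous of degree a_i + b_j, there exist a 4 × 2 matrix R whose (i,j) entry is homogeneous of degree b_j and a 2 × 4 matrix Q whose (i,j) entry is homogeneous of degree a_i, such that P = v · R + Q · u. (This says the differential DΦ_{(u,v)} of the composition map Φ(φ,ψ) = ψ ∘ φ is surjective at (u,v), i.e., the loci M(b_•) and M′(a_•) meet transversely at the corresponding morphism P^1 → G(2,4).) -/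
/-!
Every binary form of degree `m + n` lies in the ideal `(X₀ ^ m, X₁ ^ n)` with homogeneous
cofactors, and `P` is solved entry by entry using the columns `1, 3` of `v` and the rows `1, 3, 4`
of `u`: split `P₀₁` against `(X₀ ^ a₁, X₁ ^ b₂)`, then `P₀₀`, corrected by `X₀ ^ b₁` times the
`X₁ ^ b₂`-cofactor of `P₀₁`, against `(X₀ ^ a₁, X₁ ^ b₁)`. The second row is solved the same way,
starting from `P₁₀`.
-/

open MvPolynomial

namespace MvPolynomial

variable {R : Type*} [CommSemiring R]

lemma monomial_eq_X_pow_mul_add_X_pow_mul {m n : ℕ} {d : Fin 2 →₀ ℕ}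
    (hd : d.degree = m + n) (c : R) :
    ∃ f g : MvPolynomial (Fin 2) R, f.IsHomogeneous n ∧ g.IsHomogeneous m ∧
      monomial d c = X 0 ^ m * f + X 1 ^ n * g := by
  rw [Finsupp.degree_eq_sum, Fin.sum_univ_two] at hd
  by_cases h : m ≤ d 0
  · refine ⟨monomial (d - Finsupp.single 0 m) c, 0, isHomogeneous_monomial _ ?_,
      isHomogeneous_zero _ _ _, ?_⟩
    · simp [Finsupp.degree_eq_sum, Fin.sum_univ_two]
      omega
    · rw [mul_zero, add_zero, X_pow_eq_monomial, monomial_mul, one_mul,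
        add_tsub_cancel_of_le (Finsupp.single_le_iff.mpr h)]
  · have h' : n ≤ d 1 := by omega
    refine ⟨0, monomial (d - Finsupp.single 1 n) c, isHomogeneous_zero _ _ _,
      isHomogeneous_monomial _ ?_, ?_⟩
    · simp [Finsupp.degree_eq_sum, Fin.sum_univ_two]
      omega
    · rw [mul_zero, zero_add, X_pow_eq_monomial, monomial_mul, one_mul,
        add_tsub_cancel_of_le (Finsupp.single_le_iff.mpr h')]

lemma IsHomogeneous.exists_eq_X_pow_mul_add_X_pow_mul {m n : ℕ} {p : MvPolynomial (Fin 2) R}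
    (hp : p.IsHomogeneous (m + n)) :
    ∃ f g : MvPolynomial (Fin 2) R, f.IsHomogeneous n ∧ g.IsHomogeneous m ∧
      p = X 0 ^ m * f + X 1 ^ n * g := by
  rw [p.as_sum]
  refine Finset.sum_induction _ (fun q ↦ ∃ f g : MvPolynomial (Fin 2) R, f.IsHomogeneous n ∧
    g.IsHomogeneous m ∧ q = X 0 ^ m * f + X 1 ^ n * g) ?_ ?_ fun d hd ↦ ?_
  · rintro _ _ ⟨f, g, hf, hg, rfl⟩ ⟨f', g', hf', hg', rfl⟩
    exact ⟨f + f', g + g', hf.add hf', hg.add hg', by ring⟩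
  · exact ⟨0, 0, isHomogeneous_zero _ _ _, isHomogeneous_zero _ _ _, by ring⟩
  · refine monomial_eq_X_pow_mul_add_X_pow_mul ?_ _
    by_contra h
    exact mem_support_iff.mp hd (hp.coeff_eq_zero h)

end MvPolynomial

theorem stmt6_general (K : Type*) [Field K] (a1 a2 b1 b2 : ℕ)
    (v : Matrix (Fin 2) (Fin 4) (MvPolynomial (Fin 2) K))
    (u : Matrix (Fin 4) (Fin 2) (MvPolynomial (Fin 2) K))
    (hv : v = !![X 0 ^ a1, X 1 ^ a1, 0, X 0 ^ (a1 - b1) * X 1 ^ b1;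
                 0, X 0 ^ a2, X 1 ^ a2, 0])
    (hu : u = !![-(X 1 ^ b1), 0;
                 0, X 0 ^ (a1 - b1) * X 1 ^ a2;
                 0, -(X 0 ^ b2);
                 X 0 ^ b1, -(X 1 ^ b2)]) :
    ∀ P : Matrix (Fin 2) (Fin 2) (MvPolynomial (Fin 2) K),
      (∀ i j, (P i j).IsHomogeneous (![a1, a2] i + ![b1, b2] j)) →
      ∃ (R : Matrix (Fin 4) (Fin 2) (MvPolynomial (Fin 2) K))
        (Q : Matrix (Fin 2) (Fin 4) (MvPolynomial (Fin 2) K)),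
        (∀ i j, (R i j).IsHomogeneous (![b1, b2] j)) ∧
        (∀ i j, (Q i j).IsHomogeneous (![a1, a2] i)) ∧
        P = v * R + Q * u := by
  intro P hP
  obtain ⟨f₁, g₁, hf₁, hg₁, e₁⟩ :=
    (hP 0 1).exists_eq_X_pow_mul_add_X_pow_mul (m := a1) (n := b2)
  obtain ⟨f₂, g₂, hf₂, hg₂, e₂⟩ := ((hP 0 0).add (hg₁.mul (isHomogeneous_X_pow 0 b1))
    ).exists_eq_X_pow_mul_add_X_pow_mul (m := a1) (n := b1)
  obtain ⟨f₃, g₃, hf₃, hg₃, e₃⟩ := (show (P 1 0).IsHomogeneous (b1 + a2) from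
    add_comm a2 b1 ▸ hP 1 0).exists_eq_X_pow_mul_add_X_pow_mul
  obtain ⟨f₄, g₄, hf₄, hg₄, e₄⟩ := ((show (P 1 1).IsHomogeneous (b2 + a2) from
    add_comm a2 b2 ▸ hP 1 1).add ((isHomogeneous_X_pow 1 b2).mul hf₃)
    ).exists_eq_X_pow_mul_add_X_pow_mul
  refine ⟨!![f₂, f₁; 0, 0; g₃, g₄; 0, 0], !![-g₂, 0, 0, -g₁; 0, 0, -f₄, f₃], ?_, ?_, ?_⟩
  · intro i j
    fin_cases i <;> fin_cases j <;> simp [hf₁, hf₂, hg₃, hg₄, isHomogeneous_zero]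
  · intro i j
    fin_cases i <;> fin_cases j <;> simp [hg₁.neg, hg₂.neg, hf₃, hf₄.neg, isHomogeneous_zero]
  · subst hv hu
    ext i j : 1
    fin_cases i <;> fin_cases j <;> simp
    · linear_combination e₂
    · linear_combination e₁
    · linear_combination e₃
    · linear_combination e₄

/-- for the explicit pair `(u, v)` in the case `G(2,4)`, the
differential `DΦ_{(u,v)}` is surjective: every `2×2` matrix `P` with `(i,j)`
entry homogeneous of degree `a_i + b_j` can be written `P = v * R + Q * u`
with `R` a `4×2` matrix of homogeneous polynomials of degrees `b_j` and `Q` a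
`2×4` matrix of homogeneous polynomials of degrees `a_i`. -/
theorem stmt6 (K : Type*) [Field K] [IsAlgClosed K] [CharZero K] (a1 a2 b1 b2 : ℕ)
    (ha : a2 ≤ a1) (hb : b1 ≤ b2) (hsum : a1 + a2 = b1 + b2) (hb1 : b1 ≤ a1)
    (v : Matrix (Fin 2) (Fin 4) (MvPolynomial (Fin 2) K))
    (u : Matrix (Fin 4) (Fin 2) (MvPolynomial (Fin 2) K))
    (hv : v = !![X 0 ^ a1, X 1 ^ a1, 0, X 0 ^ (a1 - b1) * X 1 ^ b1;
                 0, X 0 ^ a2, X 1 ^ a2, 0])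
    (hu : u = !![-(X 1 ^ b1), 0;
                 0, X 0 ^ (a1 - b1) * X 1 ^ a2;
                 0, -(X 0 ^ b2);
                 X 0 ^ b1, -(X 1 ^ b2)]) :
    ∀ P : Matrix (Fin 2) (Fin 2) (MvPolynomial (Fin 2) K),
      (∀ i j, (P i j).IsHomogeneous (![a1, a2] i + ![b1, b2] j)) →
      ∃ (R : Matrix (Fin 4) (Fin 2) (MvPolynomial (Fin 2) K))
        (Q : Matrix (Fin 2) (Fin 4) (MvPolynomial (Fin 2) K)),
        (∀ i j, (R i j).IsHomogeneous (![b1, b2] j)) ∧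
        (∀ i j, (Q i j).IsHomogeneous (![a1, a2] i)) ∧
        P = v * R + Q * u :=
  stmt6_general K a1 a2 b1 b2 v u hv hu
end

section
/- Let c_1 ≤ c_2 ≤ … ≤ c_6 be integers such that there is no integer λ with c_l = c_1 + (l−1)λ for all 1 ≤ l ≤ 6. Then the multiset {c_1, …, c_6} admits at most one 3 × 2 filling: any two 3 × 2 fillings of {c_1, …, c_6} are equal. -/
/-!
Since consecutive columns differ by a constant, a `3 × 2` filling is `A i j = x_i + j d` with
`x_0 ≤ x_1 ≤ x_2` and `0 ≤ d`. Its entries, read in increasing order, follow one of the five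
standard Young tableaux of the `3 × 2` rectangle, so the sorted list `c_1 ≤ … ≤ c_6` is one of five
readings of the matrix. Two fillings read through the same tableau coincide; for two different
tableaux the relations `A i 1 - A i 0 = d` either force equal gaps `c_{l+1} - c_l`, i.e. an
arithmetic progression, or again identify the two matrices.
-/

/-- The multiset of entries of an `r × m` integer matrix. -/
def Filling.entries {r m : ℕ} (A : Matrix (Fin r) (Fin m) ℤ) : Multiset ℤ :=
  (Finset.univ : Finset (Fin r × Fin m)).val.map fun p => A p.1 p.2

/-- An `r × m` integer matrix `A` is a *filling* of a multiset `C` if its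
multiset of entries is `C`, its entries are weakly increasing along every row
and every column, the difference between consecutive rows is independent of
the column, and the difference between consecutive columns is independent of
the row. -/
def IsFilling {r m : ℕ} (C : Multiset ℤ) (A : Matrix (Fin r) (Fin m) ℤ) : Prop :=
  Filling.entries A = C ∧
  (∀ i : Fin r, Monotone (A i)) ∧
  (∀ j : Fin m, Monotone fun i => A i j) ∧
  (∀ (i : ℕ) (hi : i + 1 < r) (j j' : Fin m),
    A ⟨i + 1, hi⟩ j - A ⟨i, by omega⟩ j = A ⟨i + 1, hi⟩ j' - A ⟨i, by omega⟩ j') ∧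
  (∀ (j : ℕ) (hj : j + 1 < m) (i i' : Fin r),
    A i ⟨j + 1, hj⟩ - A i ⟨j, by omega⟩ = A i' ⟨j + 1, hj⟩ - A i' ⟨j, by omega⟩)

namespace IsFilling

theorem row_sub_eq {r : ℕ} {C : Multiset ℤ} {A : Matrix (Fin r) (Fin 2) ℤ}
    (hA : IsFilling C A) (i i' : Fin r) : A i 1 - A i 0 = A i' 1 - A i' 0 :=
  hA.2.2.2.2 0 (by omega) i i'

theorem eq_reading_of_sortedLE {c : List ℤ} (hc : c.SortedLE) {A : Matrix (Fin 3) (Fin 2) ℤ}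
    (hA : IsFilling (c : Multiset ℤ) A) :
    c = [A 0 0, A 0 1, A 1 0, A 1 1, A 2 0, A 2 1] ∨
    c = [A 0 0, A 0 1, A 1 0, A 2 0, A 1 1, A 2 1] ∨
    c = [A 0 0, A 1 0, A 0 1, A 1 1, A 2 0, A 2 1] ∨
    c = [A 0 0, A 1 0, A 0 1, A 2 0, A 1 1, A 2 1] ∨
    c = [A 0 0, A 1 0, A 2 0, A 0 1, A 1 1, A 2 1] := by
  have of_sorted_perm (l : List ℤ) (hperm : l.Perm [A 0 0, A 0 1, A 1 0, A 1 1, A 2 0, A 2 1])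
      (hl : l.IsChain (· ≤ ·)) : c = l :=
    (Multiset.coe_eq_coe.mp (hA.1.symm.trans (Multiset.coe_eq_coe.mpr hperm).symm)).eq_of_sortedLE
      hc hl.sortedLE
  have hrow : A 0 0 ≤ A 0 1 := hA.2.1 0 (by decide)
  have hcol₁ : A 0 0 ≤ A 1 0 := hA.2.2.1 0 (by decide)
  have hcol₂ : A 1 0 ≤ A 2 0 := hA.2.2.1 0 (by decide)
  have hstep₁ := hA.row_sub_eq 1 0
  have hstep₂ := hA.row_sub_eq 2 0
  rcases le_total (A 0 1) (A 1 0) with h | h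
  · rcases le_total (A 1 1) (A 2 0) with h' | h'
    · exact Or.inl (of_sorted_perm _ (.refl _) (by grind))
    · exact Or.inr <| Or.inl <| of_sorted_perm _ (by grind) (by grind)
  · rcases le_total (A 1 1) (A 2 0) with h' | h'
    · exact Or.inr <| Or.inr <| Or.inl <| of_sorted_perm _ (by grind) (by grind)
    · rcases le_total (A 0 1) (A 2 0) with h'' | h''
      · exact Or.inr <| Or.inr <| Or.inr <| Or.inl <| of_sorted_perm _ (by grind) (by grind)
      · exact Or.inr <| Or.inr <| Or.inr <| Or.inr <| of_sorted_perm _ (by grind) (by grind)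

end IsFilling

/-- if `c_1 ≤ … ≤ c_6` is not an arithmetic progression
`c_l = c_1 + (l-1)λ`, then the multiset `{c_1, …, c_6}` admits at most one
`3 × 2` filling. -/
theorem stmt13 (c1 c2 c3 c4 c5 c6 : ℤ)
    (h12 : c1 ≤ c2) (h23 : c2 ≤ c3) (h34 : c3 ≤ c4) (h45 : c4 ≤ c5) (h56 : c5 ≤ c6)
    (hnot : ¬ ∃ lam : ℤ, c2 = c1 + lam ∧ c3 = c1 + 2 * lam ∧ c4 = c1 + 3 * lam ∧
      c5 = c1 + 4 * lam ∧ c6 = c1 + 5 * lam)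
    (A B : Matrix (Fin 3) (Fin 2) ℤ)
    (hA : IsFilling ({c1, c2, c3, c4, c5, c6} : Multiset ℤ) A)
    (hB : IsFilling ({c1, c2, c3, c4, c5, c6} : Multiset ℤ) B) :
    A = B := by
  have hsorted : [c1, c2, c3, c4, c5, c6].SortedLE := List.IsChain.sortedLE (by grind)
  have hgaps : ¬ (c2 - c1 = c3 - c2 ∧ c3 - c2 = c4 - c3 ∧ c4 - c3 = c5 - c4 ∧
      c5 - c4 = c6 - c5) := fun _ => hnot ⟨c2 - c1, by omega⟩
  have hA₁ := hA.row_sub_eq 1 0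
  have hA₂ := hA.row_sub_eq 2 0
  have hB₁ := hB.row_sub_eq 1 0
  have hB₂ := hB.row_sub_eq 2 0
  have hentries : A 0 0 = B 0 0 ∧ A 0 1 = B 0 1 ∧ A 1 0 = B 1 0 ∧ A 1 1 = B 1 1 ∧
      A 2 0 = B 2 0 ∧ A 2 1 = B 2 1 := by
    obtain hA | hA | hA | hA | hA := hA.eq_reading_of_sortedLE hsorted <;>
    obtain hB | hB | hB | hB | hB := hB.eq_reading_of_sortedLE hsorted <;>
    simp only [List.cons.injEq, and_true] at hA hB <;>
    omega
  ext i j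
  fin_cases i <;> fin_cases j <;> simp [hentries]
end

section
/- Let c be an integer and λ ≥ 1 an integer, and let 0 ≤ a_1 ≤ a_2 ≤ a_3 and 0 ≤ b_1 ≤ b_2 be integers such that the multiset {a_i + b_j : 1 ≤ i ≤ 3, 1 ≤ j ≤ 2} equals {c, c+λ, c+2λ, c+3λ, c+4λ, c+5λ}. Suppose 0 ≤ a′_1 ≤ a′_2 ≤ a′_3 and 0 ≤ b′_1 ≤ b′_2 are integers with a′_1+a′_2+a′_3 = a_1+a_2+a_3, b′_1+b′_2 = b_1+b_2, a′_3 ≥ a_3, a′_3 + a′_2 ≥ a_3 + a_2, and b′_2 ≥ b_2, such that the multiset {a′_i + b′_j} also equals {c, c+λ, …, c+5λ}. Then a′_i = a_i for all i and b′_j = b_j for all j. (Both fillings of the arithmetic-progression splitting type in the 3 × 2 case are minimal.) -/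
/-!
The smallest and largest entries of a filling are `a₁ + b₁ = c` and `a₃ + b₂ = c + 5λ`, and the
second smallest, `c + λ`, is `a₁ + b₂` or `a₂ + b₁`. Together with the total sum this leaves
exactly two fillings: `a = (a₁, a₁ + 2λ, a₁ + 4λ)`, `b = (b₁, b₁ + λ)` and
`a = (a₁, a₁ + λ, a₁ + 2λ)`, `b = (b₁, b₁ + 3λ)`. Equal sums of the `a`'s pin down `a₁`, so two
fillings of the same shape coincide, while in the two mixed cases the dominating pair has
`a'₃ = a₃ - λ` or `b'₂ = b₂ - λ`.
-/

theorem ap_filling_three_two_cases {c lam a1 a2 a3 b1 b2 : ℤ} (hlam : 0 < lam)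
    (ha12 : a1 ≤ a2) (ha23 : a2 ≤ a3) (hb12 : b1 ≤ b2)
    (hC : ({a1 + b1, a1 + b2, a2 + b1, a2 + b2, a3 + b1, a3 + b2} : Multiset ℤ)
      = {c, c + lam, c + 2 * lam, c + 3 * lam, c + 4 * lam, c + 5 * lam}) :
    a1 + b1 = c ∧
      (a2 = a1 + 2 * lam ∧ a3 = a1 + 4 * lam ∧ b2 = b1 + lam ∨
        a2 = a1 + lam ∧ a3 = a1 + 2 * lam ∧ b2 = b1 + 3 * lam) := by
  have hmem (x : ℤ) :
      x ∈ ({a1 + b1, a1 + b2, a2 + b1, a2 + b2, a3 + b1, a3 + b2} : Multiset ℤ) ↔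
        x = c ∨ x = c + lam ∨ x = c + 2 * lam ∨ x = c + 3 * lam ∨ x = c + 4 * lam ∨
          x = c + 5 * lam := by
    rw [hC]; simp
  have hsum := congrArg Multiset.sum hC
  simp only [Multiset.insert_eq_cons, Multiset.sum_cons, Multiset.sum_singleton] at hsum
  have h11 := (hmem (a1 + b1)).1 (by simp)
  have h21 := (hmem (a2 + b1)).1 (by simp)
  have h32 := (hmem (a3 + b2)).1 (by simp)
  have hc := (hmem c).2 (by simp)
  have hc1 := (hmem (c + lam)).2 (by simp)
  have hc5 := (hmem (c + 5 * lam)).2 (by simp)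
  simp only [Multiset.insert_eq_cons, Multiset.mem_cons, Multiset.mem_singleton] at hc hc1 hc5
  have hmin : a1 + b1 = c := by omega
  have hmax : a3 + b2 = c + 5 * lam := by omega
  have hsecond : a1 + b2 = c + lam ∨ a2 + b1 = c + lam := by omega
  exact ⟨hmin, by omega⟩

theorem stmt15_general (c lam : ℤ) (hlam : 1 ≤ lam)
    (a1 a2 a3 b1 b2 a1' a2' a3' b1' b2' : ℤ)
    (ha12 : a1 ≤ a2) (ha23 : a2 ≤ a3)
    (hb12 : b1 ≤ b2)
    (hC : ({a1 + b1, a1 + b2, a2 + b1, a2 + b2, a3 + b1, a3 + b2} : Multiset ℤ)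
      = {c, c + lam, c + 2 * lam, c + 3 * lam, c + 4 * lam, c + 5 * lam})
    (ha12' : a1' ≤ a2') (ha23' : a2' ≤ a3')
    (hb12' : b1' ≤ b2')
    (hsa : a1' + a2' + a3' = a1 + a2 + a3)
    (hd3 : a3 ≤ a3') (hdb : b2 ≤ b2')
    (hC' : ({a1' + b1', a1' + b2', a2' + b1', a2' + b2', a3' + b1', a3' + b2'}
        : Multiset ℤ)
      = {c, c + lam, c + 2 * lam, c + 3 * lam, c + 4 * lam, c + 5 * lam}) :
    a1' = a1 ∧ a2' = a2 ∧ a3' = a3 ∧ b1' = b1 ∧ b2' = b2 := by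
  obtain ⟨hmin, hshape⟩ := ap_filling_three_two_cases (by omega) ha12 ha23 hb12 hC
  obtain ⟨hmin', hshape'⟩ := ap_filling_three_two_cases (by omega) ha12' ha23' hb12' hC'
  have ha1 : a1' = a1 := by
    rcases hshape with ⟨_, _, _⟩ | ⟨_, _, _⟩ <;> rcases hshape' with ⟨_, _, _⟩ | ⟨_, _, _⟩ <;> omega
  omega

/-- minimality of both fillings of the arithmetic-progression
splitting type in the `3 × 2` case: if `(a'_•, b'_•)` dominates `(a_•, b_•)`
in the polygonal-line order (same sums, `a'_3 ≥ a_3`, `a'_3 + a'_2 ≥ a_3 + a_2`,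
`b'_2 ≥ b_2`) and the multiset of pairwise sums is again
`{c, c+λ, …, c+5λ}`, then `a' = a` and `b' = b`. -/
theorem stmt15 (c lam : ℤ) (hlam : 1 ≤ lam)
    (a1 a2 a3 b1 b2 a1' a2' a3' b1' b2' : ℤ)
    (ha0 : 0 ≤ a1) (ha12 : a1 ≤ a2) (ha23 : a2 ≤ a3)
    (hb0 : 0 ≤ b1) (hb12 : b1 ≤ b2)
    (hC : ({a1 + b1, a1 + b2, a2 + b1, a2 + b2, a3 + b1, a3 + b2} : Multiset ℤ)
      = {c, c + lam, c + 2 * lam, c + 3 * lam, c + 4 * lam, c + 5 * lam})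
    (ha0' : 0 ≤ a1') (ha12' : a1' ≤ a2') (ha23' : a2' ≤ a3')
    (hb0' : 0 ≤ b1') (hb12' : b1' ≤ b2')
    (hsa : a1' + a2' + a3' = a1 + a2 + a3) (hsb : b1' + b2' = b1 + b2)
    (hd3 : a3 ≤ a3') (hd32 : a3 + a2 ≤ a3' + a2') (hdb : b2 ≤ b2')
    (hC' : ({a1' + b1', a1' + b2', a2' + b1', a2' + b2', a3' + b1', a3' + b2'}
        : Multiset ℤ)
      = {c, c + lam, c + 2 * lam, c + 3 * lam, c + 4 * lam, c + 5 * lam}) :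
    a1' = a1 ∧ a2' = a2 ∧ a3' = a3 ∧ b1' = b1 ∧ b2' = b2 :=
  stmt15_general c lam hlam a1 a2 a3 b1 b2 a1' a2' a3' b1' b2' ha12 ha23 hb12 hC ha12' ha23' hb12'
    hsa hd3 hdb hC'
end

section
/- Let c be an integer and λ ≥ 1 an integer. Then a 4 × 2 integer matrix is a filling of the multiset {c, c, c+λ, c+λ, c+2λ, c+2λ, c+3λ, c+3λ} (each of the four values c, c+λ, c+2λ, c+3λ occurring twice) if and only if it equals one of the three matrices [[c, c], [c+λ, c+λ], [c+2λ, c+2λ], [c+3λ, c+3λ]], [[c, c+λ], [c, c+λ], [c+2λ, c+3λ], [c+2λ, c+3λ]], or [[c, c+2λ], [c, c+2λ], [c+λ, c+3λ], [c+λ, c+3λ]]. -/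
/-!
A filling is additive, `A i j = A i 0 + A 0 j - A 0 0`, so a `4 × 2`
filling has entries `aᵢ` and `aᵢ + e` with `a₀ ≤ a₁ ≤ a₂ ≤ a₃` and `e ≥ 0`. Comparing minima
and maxima gives `a₀ = c` and `a₃ + e = c + 3λ`. If `e = 0`, the `aᵢ` must run through
`c, c + λ, c + 2λ, c + 3λ`. If `e > 0`, the second copy of `c` can only be `a₁`; comparing sums
then gives `a₂ + e = c + 3λ`, and `c + λ` is either `c + e` or `a₂`, which are the two
remaining fillings.
-/

theorem isFilling_iff {r m : ℕ} {C : Multiset ℤ} {A : Matrix (Fin (r + 1)) (Fin (m + 1)) ℤ} :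
    IsFilling C A ↔ Filling.entries A = C ∧ Monotone (fun i => A i 0) ∧ Monotone (A 0) ∧
      ∀ i j, A i j = A i 0 + A 0 j - A 0 0 := by
  constructor
  · rintro ⟨hC, hrow, hcol, hrowDiff, -⟩
    refine ⟨hC, hcol 0, hrow 0, fun i j => ?_⟩
    induction i using Fin.induction with
    | zero => ring
    | succ i ih =>
      have hstep : A i.succ j - A i.castSucc j = A i.succ 0 - A i.castSucc 0 :=
        hrowDiff i i.succ.isLt j 0
      linarith
  · rintro ⟨hC, hcol, hrow, hadd⟩
    refine ⟨hC, fun i a b hab => ?_, fun j a b hab => ?_, fun i hi j j' => ?_, fun j hj i i' => ?_⟩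
    · rw [hadd i a, hadd i b]; linarith [hrow hab]
    · simp only [hadd a j, hadd b j]; linarith [hcol hab]
    · rw [hadd _ j, hadd _ j', hadd ⟨i, _⟩ j, hadd ⟨i, _⟩ j']; ring
    · rw [hadd i ⟨j + 1, hj⟩, hadd i ⟨j, _⟩, hadd i' ⟨j + 1, hj⟩, hadd i' ⟨j, _⟩]; ring

theorem Filling.entries_fin_four_two (A : Matrix (Fin 4) (Fin 2) ℤ) :
    Filling.entries A = {A 0 0, A 0 1, A 1 0, A 1 1, A 2 0, A 2 1, A 3 0, A 3 1} := rfl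

theorem progression_cases_of_pairs_eq {c l a₀ a₁ a₂ a₃ e : ℤ} (hl : 0 < l)
    (h₀₁ : a₀ ≤ a₁) (h₁₂ : a₁ ≤ a₂) (h₂₃ : a₂ ≤ a₃) (he : 0 ≤ e)
    (h : ({a₀, a₀ + e, a₁, a₁ + e, a₂, a₂ + e, a₃, a₃ + e} : Multiset ℤ) =
      {c, c, c + l, c + l, c + 2 * l, c + 2 * l, c + 3 * l, c + 3 * l}) :
    a₀ = c ∧
      (a₁ = c + l ∧ a₂ = c + 2 * l ∧ a₃ = c + 3 * l ∧ e = 0 ∨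
        a₁ = c ∧ a₂ = c + 2 * l ∧ a₃ = c + 2 * l ∧ e = l ∨
        a₁ = c ∧ a₂ = c + l ∧ a₃ = c + l ∧ e = 2 * l) := by
  have mem (x : ℤ) := congrArg (x ∈ ·) h
  simp only [Multiset.insert_eq_cons, Multiset.mem_cons, Multiset.mem_singleton, eq_iff_iff] at mem
  have ha₀ : a₀ = c := by
    have := (mem a₀).1 (by simp)
    have := (mem c).2 (by simp)
    omega
  have ha₃ : a₃ + e = c + 3 * l := by
    have := (mem (a₃ + e)).1 (by simp)
    have := (mem (c + 3 * l)).2 (by simp)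
    omega
  have hsum := congrArg Multiset.sum h
  simp only [Multiset.insert_eq_cons, Multiset.sum_cons, Multiset.sum_singleton] at hsum
  refine ⟨ha₀, ?_⟩
  rcases he.eq_or_lt with rfl | he
  · have := (mem (c + l)).2 (by simp)
    have := (mem (c + 2 * l)).2 (by simp)
    omega
  · have hc : c ∈ ({a₀ + e, a₁, a₁ + e, a₂, a₂ + e, a₃, a₃ + e} : Multiset ℤ) := by
      subst ha₀
      rw [(Multiset.cons_inj_right _).mp h]
      simp
    simp only [Multiset.insert_eq_cons, Multiset.mem_cons, Multiset.mem_singleton] at hc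
    have ha₁ : a₁ = c := by omega
    have ha₂ : a₂ + e = c + 3 * l := by omega
    have := (mem (c + l)).2 (by simp)
    omega

/-- a `4 × 2` matrix is a filling of the multiset
`{c, c, c+λ, c+λ, c+2λ, c+2λ, c+3λ, c+3λ}` (with `λ ≥ 1`) iff it is one of the
three matrices `[[c, c], [c+λ, c+λ], [c+2λ, c+2λ], [c+3λ, c+3λ]]`,
`[[c, c+λ], [c, c+λ], [c+2λ, c+3λ], [c+2λ, c+3λ]]`, or
`[[c, c+2λ], [c, c+2λ], [c+λ, c+3λ], [c+λ, c+3λ]]`. -/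
theorem stmt16 (c lam : ℤ) (hlam : 1 ≤ lam) :
    ∀ A : Matrix (Fin 4) (Fin 2) ℤ,
      IsFilling ({c, c, c + lam, c + lam, c + 2 * lam, c + 2 * lam,
          c + 3 * lam, c + 3 * lam} : Multiset ℤ) A ↔
        A = !![c, c; c + lam, c + lam; c + 2 * lam, c + 2 * lam;
               c + 3 * lam, c + 3 * lam] ∨
        A = !![c, c + lam; c, c + lam; c + 2 * lam, c + 3 * lam;
               c + 2 * lam, c + 3 * lam] ∨
        A = !![c, c + 2 * lam; c, c + 2 * lam; c + lam, c + 3 * lam;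
               c + lam, c + 3 * lam] := by
  intro A
  rw [isFilling_iff, Filling.entries_fin_four_two]
  constructor
  · rintro ⟨hC, hcol, hrow, hadd⟩
    have hshift (i : Fin 4) : A i 1 = A i 0 + (A 0 1 - A 0 0) := by rw [hadd i 1]; ring
    have he : 0 ≤ A 0 1 - A 0 0 := sub_nonneg.mpr (hrow zero_le_one)
    generalize A 0 1 - A 0 0 = e at hshift he
    rw [hshift, hshift, hshift, hshift] at hC
    obtain ⟨h₀, ⟨h₁, h₂, h₃, rfl⟩ | ⟨h₁, h₂, h₃, rfl⟩ | ⟨h₁, h₂, h₃, rfl⟩⟩ :=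
      progression_cases_of_pairs_eq hlam (hcol (by decide : (0 : Fin 4) ≤ 1))
        (hcol (by decide : (1 : Fin 4) ≤ 2)) (hcol (by decide : (2 : Fin 4) ≤ 3)) he hC
    · left; ext i j; fin_cases i <;> fin_cases j <;> simp [hshift, h₀, h₁, h₂, h₃]
    · right; left; ext i j; fin_cases i <;> fin_cases j <;> simp [hshift, h₀, h₁, h₂, h₃] <;> ring
    · right; right; ext i j; fin_cases i <;> fin_cases j <;> simp [hshift, h₀, h₁, h₂, h₃] <;> ring
  · rintro (rfl | rfl | rfl) <;>
      refine ⟨by simp [Multiset.insert_eq_cons, Multiset.cons_swap], ?_, ?_,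
        fun i j => by fin_cases i <;> fin_cases j <;> simp <;> ring⟩ <;>
      simp [Fin.monotone_iff_le_succ, Fin.forall_fin_succ] <;> omega
end

section
/- Let n ≥ 4 and 2 ≤ r ≤ n−2, and let C be a multiset of r(n−r) integers. Then the number of distinct r × (n−r) fillings of C is at most the binomial coefficient C(r(n−r)−2, n−r−1). (Every filling of C has the same (1,1) entry — the minimum of C — and the same (r, n−r) entry — the maximum of C — and is uniquely determined by its entries in positions (1,2), …, (1, n−r).) -/
open Finset LaurentPolynomial

theorem Multiset.map_univ_val_eq_sum {ι α : Type*} [Fintype ι] (f : ι → α) :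
    univ.val.map f = ∑ i, {f i} := by
  rw [← (univ.val.map f).sum_map_singleton, Multiset.map_map]; rfl

theorem Monotone.eq_of_map_univ_val_eq {α : Type*} [PartialOrder α] {k : ℕ} {f g : Fin k → α}
    (hf : Monotone f) (hg : Monotone g) (h : univ.val.map f = univ.val.map g) : f = g := by
  rw [Fin.univ_val_map, Fin.univ_val_map, Multiset.coe_eq_coe] at h
  exact List.ofFn_injective (h.eq_of_sortedLE hf.sortedLE_ofFn hg.sortedLE_ofFn)

noncomputable def Multiset.toLaurent (M : Multiset ℤ) : LaurentPolynomial ℤ := (M.map T).sum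

namespace Multiset

theorem coeff_toLaurent (M : Multiset ℤ) (k : ℤ) : M.toLaurent.coeff k = M.count k := by
  induction M using Multiset.induction_on with
  | empty => simp [toLaurent]
  | cons a M ih =>
    rw [toLaurent, map_cons, sum_cons, AddMonoidAlgebra.coeff_add, Finsupp.add_apply,
      ← toLaurent, ih, count_cons, T, AddMonoidAlgebra.coeff_single, Finsupp.single_apply]
    by_cases h : a = k
    · simp [h, add_comm]
    · simp [h, Ne.symm h]

theorem toLaurent_injective : Function.Injective toLaurent := fun M N h =>
  Multiset.ext.mpr fun k => by
    simpa only [coeff_toLaurent, Nat.cast_inj] using congrArg (fun p => p.coeff k) h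

theorem toLaurent_ne_zero {M : Multiset ℤ} (hM : M ≠ 0) : M.toLaurent ≠ 0 := fun h =>
  hM (toLaurent_injective (h.trans (by simp [toLaurent])))

theorem toLaurent_map_univ_val {ι : Type*} [Fintype ι] (f : ι → ℤ) :
    (univ.val.map f).toLaurent = ∑ i, T (f i) := by
  rw [toLaurent, Multiset.map_map]; rfl

end Multiset

namespace Filling

def rowTail {r m : ℕ} [NeZero r] [NeZero m] (A : Matrix (Fin r) (Fin m) ℤ) : Multiset ℤ :=
  (univ.val.map (A 0)).erase (A 0 0)

theorem entries_eq_sum {r m : ℕ} (A : Matrix (Fin r) (Fin m) ℤ) :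
    entries A = ∑ i, univ.val.map (A i) := by
  simp only [entries, Multiset.map_univ_val_eq_sum, Fintype.sum_prod_type]

end Filling

namespace IsFilling

open Filling

variable {r m : ℕ} {C : Multiset ℤ} {A B : Matrix (Fin r) (Fin m) ℤ}

theorem apply_mem (hA : IsFilling C A) (i : Fin r) (j : Fin m) : A i j ∈ C := by
  rw [← hA.1, entries]
  exact Multiset.mem_map.mpr ⟨(i, j), mem_univ_val _, rfl⟩

theorem exists_eq_of_mem (hA : IsFilling C A) {x : ℤ} (hx : x ∈ C) :
    ∃ i j, x = A i j := by
  rw [← hA.1, entries] at hx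
  obtain ⟨p, -, rfl⟩ := Multiset.mem_map.mp hx
  exact ⟨p.1, p.2, rfl⟩

variable [NeZero r] [NeZero m]

theorem apply_zero_zero_le (hA : IsFilling C A) {x : ℤ} (hx : x ∈ C) : A 0 0 ≤ x := by
  obtain ⟨i, j, rfl⟩ := hA.exists_eq_of_mem hx
  exact (hA.2.2.1 0 (Fin.zero_le i)).trans (hA.2.1 i (Fin.zero_le j))

theorem le_apply_top_top (hA : IsFilling C A) {x : ℤ} (hx : x ∈ C) : x ≤ A ⊤ ⊤ := by
  obtain ⟨i, j, rfl⟩ := hA.exists_eq_of_mem hx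
  exact (hA.2.2.1 j le_top).trans (hA.2.1 ⊤ le_top)

theorem apply_zero_zero_eq (hA : IsFilling C A) (hB : IsFilling C B) : A 0 0 = B 0 0 :=
  (hA.apply_zero_zero_le (hB.apply_mem 0 0)).antisymm (hB.apply_zero_zero_le (hA.apply_mem 0 0))

theorem apply_top_top_eq (hA : IsFilling C A) (hB : IsFilling C B) : A ⊤ ⊤ = B ⊤ ⊤ :=
  (hB.le_apply_top_top (hA.apply_mem ⊤ ⊤)).antisymm (hA.le_apply_top_top (hB.apply_mem ⊤ ⊤))

theorem apply_eq_add_sub (hA : IsFilling C A) (i : Fin r) (j : Fin m) :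
    A i j = A 0 j + (A i 0 - A 0 0) := by
  obtain ⟨i, hi⟩ := i
  induction i with
  | zero => simp
  | succ k ih =>
    have hstep := hA.2.2.2.1 k hi j 0
    have hk := ih (by omega)
    omega

theorem toLaurent_eq_mul (hA : IsFilling C A) :
    C.toLaurent = (univ.val.map (A 0)).toLaurent *
      (univ.val.map fun i => A i 0 - A 0 0).toLaurent := by
  rw [← hA.1, entries, Multiset.toLaurent_map_univ_val, Multiset.toLaurent_map_univ_val,
    Multiset.toLaurent_map_univ_val, Fintype.sum_prod_type, sum_mul_sum, sum_comm]
  refine sum_congr rfl fun j _ => sum_congr rfl fun i _ => ?_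
  exact (congrArg T (hA.apply_eq_add_sub i j)).trans (T_add _ _)

theorem eq_of_row_zero_eq (hA : IsFilling C A) (hB : IsFilling C B) (h : A 0 = B 0) :
    A = B := by
  have hrow : univ.val.map (A 0) ≠ 0 :=
    Multiset.card_pos.mp (by simpa using NeZero.pos m)
  have hcol : (univ.val.map fun i => A i 0 - A 0 0) = univ.val.map fun i => B i 0 - B 0 0 := by
    apply Multiset.toLaurent_injective
    apply mul_left_cancel₀ (Multiset.toLaurent_ne_zero hrow)
    rw [← hA.toLaurent_eq_mul, hB.toLaurent_eq_mul, h]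
  have hcol' := Monotone.eq_of_map_univ_val_eq (fun _ _ hij => by simpa using hA.2.2.1 0 hij)
    (fun _ _ hij => by simpa using hB.2.2.1 0 hij) hcol
  ext i j
  linarith [hA.apply_eq_add_sub i j, hB.apply_eq_add_sub i j, congrFun hcol' i, congrFun h j,
    congrFun h 0]

theorem eq_of_rowTail_eq (hA : IsFilling C A) (hB : IsFilling C B)
    (h : rowTail A = rowTail B) : A = B := by
  refine hA.eq_of_row_zero_eq hB (Monotone.eq_of_map_univ_val_eq (hA.2.1 0) (hB.2.1 0) ?_)
  rw [← Multiset.cons_erase (Multiset.mem_map_of_mem (A 0) (mem_univ_val 0)),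
    ← Multiset.cons_erase (Multiset.mem_map_of_mem (B 0) (mem_univ_val 0))]
  exact congr_arg₂ _ (hA.apply_zero_zero_eq hB) h

theorem map_row_zero_add_le (hr : 1 < r) (hA : IsFilling C A) :
    univ.val.map (A 0) + {A ⊤ ⊤} ≤ C := by
  have h0top : (0 : Fin r) ≠ ⊤ := by
    simp only [Ne, Fin.ext_iff, Fin.val_zero, Fin.val_top]; omega
  calc univ.val.map (A 0) + {A ⊤ ⊤} ≤ univ.val.map (A 0) + univ.val.map (A ⊤) := by
        gcongr
        exact Multiset.singleton_le.mpr (Multiset.mem_map_of_mem _ (mem_univ_val _))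
    _ = ∑ i ∈ {0, ⊤}, univ.val.map (A i) :=
        (sum_pair (f := fun i => univ.val.map (A i)) h0top).symm
    _ ≤ ∑ i, univ.val.map (A i) := sum_le_sum_of_subset (subset_univ _)
    _ = C := (entries_eq_sum A).symm.trans hA.1

theorem corners_le (hr : 1 < r) (hA : IsFilling C A) : {A 0 0, A ⊤ ⊤} ≤ C := by
  refine le_trans ?_ (hA.map_row_zero_add_le hr)
  rw [Multiset.insert_eq_cons, ← Multiset.singleton_add]
  gcongr
  exact Multiset.singleton_le.mpr (Multiset.mem_map_of_mem _ (mem_univ_val _))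

theorem rowTail_mem_powersetCard (hr : 1 < r) (hA : IsFilling C A) (hB : IsFilling C B) :
    rowTail A ∈ Multiset.powersetCard (m - 1) (C - {B 0 0, B ⊤ ⊤}) := by
  rw [Multiset.mem_powersetCard, rowTail, Multiset.card_erase_of_mem
    (Multiset.mem_map_of_mem _ (mem_univ_val _)), Multiset.card_map, card_val, card_univ,
    Fintype.card_fin]
  refine ⟨le_tsub_of_add_le_right ?_, rfl⟩
  rw [← hA.apply_zero_zero_eq hB, ← hA.apply_top_top_eq hB, Multiset.insert_eq_cons,
    ← Multiset.singleton_add, ← add_assoc, add_comm _ {A 0 0}, Multiset.singleton_add,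
    Multiset.cons_erase (Multiset.mem_map_of_mem _ (mem_univ_val _))]
  exact hA.map_row_zero_add_le hr

end IsFilling

theorem stmt17_general (n r : ℕ) (hr2 : 2 ≤ r) (hrn : r ≤ n - 2)
    (C : Multiset ℤ) (hC : Multiset.card C = r * (n - r)) :
    {A : Matrix (Fin r) (Fin (n - r)) ℤ | IsFilling C A}.Finite ∧
    {A : Matrix (Fin r) (Fin (n - r)) ℤ | IsFilling C A}.ncard ≤
      Nat.choose (r * (n - r) - 2) (n - r - 1) := by
  have : NeZero r := ⟨by omega⟩
  have : NeZero (n - r) := ⟨by omega⟩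
  set S := {A : Matrix (Fin r) (Fin (n - r)) ℤ | IsFilling C A}
  obtain hS | ⟨B, hB⟩ := S.eq_empty_or_nonempty
  · simp [hS]
  set tails := (Multiset.powersetCard (n - r - 1) (C - {B 0 0, B ⊤ ⊤})).toFinset
  have hmaps : Set.MapsTo Filling.rowTail S tails := fun A hA =>
    Multiset.mem_toFinset.mpr (hA.rowTail_mem_powersetCard hr2 hB)
  have hinj : Set.InjOn Filling.rowTail S := fun A hA A' hA' h => hA.eq_of_rowTail_eq hA' h
  refine ⟨.of_injOn hmaps hinj tails.finite_toSet, ?_⟩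
  calc S.ncard ≤ (tails : Set (Multiset ℤ)).ncard := Set.ncard_le_ncard_of_injOn _ hmaps hinj
    _ = tails.card := Set.ncard_coe_finset tails
    _ ≤ Multiset.card (Multiset.powersetCard (n - r - 1) (C - {B 0 0, B ⊤ ⊤})) :=
      Multiset.toFinset_card_le _
    _ = (r * (n - r) - 2).choose (n - r - 1) := by
      rw [Multiset.card_powersetCard, Multiset.card_sub (hB.corners_le hr2), hC]; rfl

/-- for `n ≥ 4` and `2 ≤ r ≤ n - 2`, a multiset `C` of
`r(n-r)` integers has only finitely many `r × (n-r)` fillings, and their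
number is at most the binomial coefficient `C(r(n-r) - 2, n-r-1)`. -/
theorem stmt17 (n r : ℕ) (hn : 4 ≤ n) (hr2 : 2 ≤ r) (hrn : r ≤ n - 2)
    (C : Multiset ℤ) (hC : Multiset.card C = r * (n - r)) :
    {A : Matrix (Fin r) (Fin (n - r)) ℤ | IsFilling C A}.Finite ∧
    {A : Matrix (Fin r) (Fin (n - r)) ℤ | IsFilling C A}.ncard ≤
      Nat.choose (r * (n - r) - 2) (n - r - 1) :=
  stmt17_general n r hr2 hrn C hC
end
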